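/- arXiv:2509.11955 — 7 statements merged into one kernel-verified Lean document; each statement's English description precedes it below -/
import Mathlib

section
/- Let H be a real Hilbert space and let u, w ∈ H satisfy ⟨w, u⟩ ≥ 0. Define the linear functional b(u, ·) : H → ℝ by b(u, q) := ⟨u, q⟩ + ⟨w, q⟩. Then √(‖u‖² + ‖w‖²) ≤ sup_{q ∈ H, q ≠ 0} b(u, q)/‖q‖. -/
/-!
Testing `b(u, ·) = ⟪u + w, ·⟫` against `q = u + w` gives `‖u + w‖`, which bounds the supremum from
below; and `⟪w, u⟫ ≥ 0` makes `‖u + w‖² = ‖u‖² + 2⟪u, w⟫ + ‖w‖² ≥ ‖u‖² + ‖w‖²`.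
-/

open RealInnerProductSpace

section

variable {H : Type*} [NormedAddCommGroup H] [InnerProductSpace ℝ H]

theorem norm_sq_add_norm_sq_le_norm_add_sq {x y : H} (hxy : 0 ≤ ⟪x, y⟫) :
    ‖x‖ ^ 2 + ‖y‖ ^ 2 ≤ ‖x + y‖ ^ 2 := by
  rw [norm_add_sq_real]
  linarith

theorem bddAbove_range_inner_div_norm (z : H) :
    BddAbove (Set.range fun q : {q : H // q ≠ 0} => ⟪z, (q : H)⟫ / ‖(q : H)‖) := by
  refine ⟨‖z‖, ?_⟩
  rintro _ ⟨⟨q, hq⟩, rfl⟩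
  exact div_le_of_le_mul₀ (norm_nonneg q) (norm_nonneg z) (real_inner_le_norm z q)

theorem norm_le_iSup_inner_div_norm (z : H) :
    ‖z‖ ≤ ⨆ q : {q : H // q ≠ 0}, ⟪z, (q : H)⟫ / ‖(q : H)‖ := by
  by_cases hz : z = 0
  · subst hz
    simp
  · refine le_ciSup_of_le (bddAbove_range_inner_div_norm z) ⟨z, hz⟩ (le_of_eq ?_)
    rw [real_inner_self_eq_norm_sq, sq, mul_div_cancel_right₀ _ (norm_ne_zero_iff.mpr hz)]

end

/-- Abstract Hilbert-space inf-sup stability lemma: if `⟨w, u⟩ ≥ 0` and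
`b(u, q) := ⟨u, q⟩ + ⟨w, q⟩`, then `√(‖u‖² + ‖w‖²) ≤ sup_{q ≠ 0} b(u, q)/‖q‖`. -/
theorem abstract_inf_sup_stability
    {H : Type*} [NormedAddCommGroup H] [InnerProductSpace ℝ H]
    (u w : H) (hwu : 0 ≤ ⟪w, u⟫) :
    Real.sqrt (‖u‖ ^ 2 + ‖w‖ ^ 2) ≤
      ⨆ q : {q : H // q ≠ 0}, (⟪u, (q : H)⟫ + ⟪w, (q : H)⟫) / ‖(q : H)‖ := by
  have hsq : ‖u‖ ^ 2 + ‖w‖ ^ 2 ≤ ‖u + w‖ ^ 2 :=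
    norm_sq_add_norm_sq_le_norm_add_sq (real_inner_comm u w ▸ hwu)
  simp_rw [← inner_add_left]
  calc Real.sqrt (‖u‖ ^ 2 + ‖w‖ ^ 2) ≤ ‖u + w‖ := Real.sqrt_le_iff.mpr ⟨norm_nonneg _, hsq⟩
    _ ≤ _ := norm_le_iSup_inner_div_norm (u + w)
end

section
/- Let A ∈ ℝ^{M×M} be symmetric positive definite and let K ∈ ℝ^{M×M} satisfy xᵀ K x ≥ 0 for all x ∈ ℝ^M. Then B := A + K is invertible, and for every u ∈ ℝ^M, setting w := A⁻¹ K u, there holds √(uᵀ A u + wᵀ A w) ≤ max_{q ∈ ℝ^M, q ≠ 0} (qᵀ B u)/√(qᵀ A q). -/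
open Matrix

section aux

variable {M : ℕ} (A : Matrix (Fin M) (Fin M) ℝ)

lemma quad_nonneg (hA : A.PosDef) (x : Fin M → ℝ) : 0 ≤ x ⬝ᵥ (A *ᵥ x) := by
  simpa using hA.posSemidef.dotProduct_mulVec_nonneg x

lemma quad_pos (hA : A.PosDef) {x : Fin M → ℝ} (hx : x ≠ 0) : 0 < x ⬝ᵥ (A *ᵥ x) := by
  simpa using hA.dotProduct_mulVec_pos hx

lemma sym_dot (hA : A.PosDef) (x y : Fin M → ℝ) :
    x ⬝ᵥ (A *ᵥ y) = y ⬝ᵥ (A *ᵥ x) := by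
  have hAt : Aᵀ = A := by
    have := hA.1
    simpa [Matrix.IsHermitian, Matrix.conjTranspose_eq_transpose_of_trivial] using this
  rw [Matrix.dotProduct_mulVec, ← Matrix.mulVec_transpose, hAt, dotProduct_comm]

lemma cauchy_schwarz (hA : A.PosDef) (x y : Fin M → ℝ) :
    x ⬝ᵥ (A *ᵥ y) ≤ Real.sqrt (x ⬝ᵥ (A *ᵥ x)) * Real.sqrt (y ⬝ᵥ (A *ᵥ y)) := by
  have hd : discrim (y ⬝ᵥ (A *ᵥ y)) (2 * (x ⬝ᵥ (A *ᵥ y))) (x ⬝ᵥ (A *ᵥ x)) ≤ 0 := by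
    apply discrim_le_zero
    intro t
    have h := quad_nonneg A hA (x + t • y)
    have hexp : (x + t • y) ⬝ᵥ (A *ᵥ (x + t • y)) =
        (y ⬝ᵥ (A *ᵥ y)) * (t * t) + 2 * (x ⬝ᵥ (A *ᵥ y)) * t + x ⬝ᵥ (A *ᵥ x) := by
      simp only [Matrix.mulVec_add, Matrix.mulVec_smul, add_dotProduct,
        smul_dotProduct, dotProduct_add, dotProduct_smul,
        sym_dot A hA y x, smul_eq_mul]
      ring
    linarith [hexp ▸ h]
  have hsq : (x ⬝ᵥ (A *ᵥ y)) ^ 2 ≤ (x ⬝ᵥ (A *ᵥ x)) * (y ⬝ᵥ (A *ᵥ y)) := by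
    unfold discrim at hd; nlinarith
  calc x ⬝ᵥ (A *ᵥ y) ≤ |x ⬝ᵥ (A *ᵥ y)| := le_abs_self _
    _ = Real.sqrt ((x ⬝ᵥ (A *ᵥ y)) ^ 2) := (Real.sqrt_sq_eq_abs _).symm
    _ ≤ Real.sqrt ((x ⬝ᵥ (A *ᵥ x)) * (y ⬝ᵥ (A *ᵥ y))) := Real.sqrt_le_sqrt hsq
    _ = _ := Real.sqrt_mul (quad_nonneg A hA x) _

end aux

/-- Algebraic discrete inf-sup stability: for `A` symmetric positive definite and `K`
positive semi-definite (`xᵀKx ≥ 0`), the matrix `B = A + K` is invertible, and for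
every `u`, with `w = A⁻¹Ku`, `√(uᵀAu + wᵀAw) ≤ max_{q ≠ 0} (qᵀBu)/√(qᵀAq)`. -/
theorem discrete_inf_sup_stability
    (M : ℕ) (A K : Matrix (Fin M) (Fin M) ℝ)
    (hA : A.PosDef) (hK : ∀ x : Fin M → ℝ, 0 ≤ x ⬝ᵥ (K *ᵥ x)) :
    IsUnit (A + K) ∧
    ∀ u : Fin M → ℝ,
      Real.sqrt (u ⬝ᵥ (A *ᵥ u) + (A⁻¹ *ᵥ (K *ᵥ u)) ⬝ᵥ (A *ᵥ (A⁻¹ *ᵥ (K *ᵥ u)))) ≤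
        ⨆ q : {q : Fin M → ℝ // q ≠ 0},
          ((q : Fin M → ℝ) ⬝ᵥ ((A + K) *ᵥ u)) /
            Real.sqrt ((q : Fin M → ℝ) ⬝ᵥ (A *ᵥ (q : Fin M → ℝ))) := by
  have hAdet : IsUnit A.det := isUnit_iff_ne_zero.2 (ne_of_gt hA.det_pos)
  have hBunit : IsUnit (A + K) := by
    rw [Matrix.isUnit_iff_isUnit_det, isUnit_iff_ne_zero]
    intro hdet
    obtain ⟨v, hv, hv0⟩ := Matrix.exists_mulVec_eq_zero_iff.2 hdet
    have : v ⬝ᵥ ((A + K) *ᵥ v) = 0 := by rw [hv0, dotProduct_zero]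
    rw [Matrix.add_mulVec, dotProduct_add] at this
    have h1 := quad_pos A hA hv
    have h2 := hK v
    linarith
  refine ⟨hBunit, fun u => ?_⟩
  set w : Fin M → ℝ := A⁻¹ *ᵥ (K *ᵥ u) with hw
  have hAw : A *ᵥ w = K *ᵥ u := by
    rw [hw, Matrix.mulVec_mulVec, Matrix.mul_nonsing_inv A hAdet, Matrix.one_mulVec]
  by_cases hu : u = 0
  · subst hu
    have hw0 : w = 0 := by simp [hw]
    rw [hw0]
    simp only [Matrix.mulVec_zero, dotProduct_zero, add_zero, Real.sqrt_zero]
    apply Real.iSup_nonneg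
    intro q
    simp
  · -- the good test vector
    set q : Fin M → ℝ := u + w with hq
    have hBu : (A + K) *ᵥ u = A *ᵥ q := by
      rw [hq, Matrix.mulVec_add, Matrix.add_mulVec, hAw]
    have huAw : u ⬝ᵥ (A *ᵥ w) = u ⬝ᵥ (K *ᵥ u) := by rw [hAw]
    have hqAq : q ⬝ᵥ (A *ᵥ q) =
        u ⬝ᵥ (A *ᵥ u) + 2 * (u ⬝ᵥ (K *ᵥ u)) + w ⬝ᵥ (A *ᵥ w) := by
      rw [hq, Matrix.mulVec_add, add_dotProduct, dotProduct_add,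
        dotProduct_add, sym_dot A hA w u, huAw]
      ring
    have hqne : q ≠ 0 := by
      intro h0
      have : u ⬝ᵥ (A *ᵥ q) = 0 := by rw [h0, Matrix.mulVec_zero, dotProduct_zero]
      rw [hq, Matrix.mulVec_add, dotProduct_add, huAw] at this
      have h1 := quad_pos A hA hu
      have h2 := hK u
      linarith
    have hqAqpos : 0 < q ⬝ᵥ (A *ᵥ q) := quad_pos A hA hqne
    -- the range is bounded above by √(qᵀAq)
    have hbdd : BddAbove (Set.range fun p : {q : Fin M → ℝ // q ≠ 0} =>
        ((p : Fin M → ℝ) ⬝ᵥ ((A + K) *ᵥ u)) /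
          Real.sqrt ((p : Fin M → ℝ) ⬝ᵥ (A *ᵥ (p : Fin M → ℝ)))) := by
      refine ⟨Real.sqrt (q ⬝ᵥ (A *ᵥ q)), ?_⟩
      rintro x ⟨⟨p, hp⟩, rfl⟩
      have hpAp : 0 < p ⬝ᵥ (A *ᵥ p) := quad_pos A hA hp
      have hs : 0 < Real.sqrt (p ⬝ᵥ (A *ᵥ p)) := Real.sqrt_pos.2 hpAp
      rw [div_le_iff₀ hs]
      calc p ⬝ᵥ ((A + K) *ᵥ u) = p ⬝ᵥ (A *ᵥ q) := by rw [hBu]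
        _ ≤ Real.sqrt (p ⬝ᵥ (A *ᵥ p)) * Real.sqrt (q ⬝ᵥ (A *ᵥ q)) :=
            cauchy_schwarz A hA p q
        _ = Real.sqrt (q ⬝ᵥ (A *ᵥ q)) * Real.sqrt (p ⬝ᵥ (A *ᵥ p)) := mul_comm _ _
    have hle : Real.sqrt (q ⬝ᵥ (A *ᵥ q)) ≤
        ⨆ p : {q : Fin M → ℝ // q ≠ 0},
          ((p : Fin M → ℝ) ⬝ᵥ ((A + K) *ᵥ u)) /
            Real.sqrt ((p : Fin M → ℝ) ⬝ᵥ (A *ᵥ (p : Fin M → ℝ))) := by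
      have := le_ciSup hbdd (⟨q, hqne⟩ : {q : Fin M → ℝ // q ≠ 0})
      calc Real.sqrt (q ⬝ᵥ (A *ᵥ q))
          = (q ⬝ᵥ (A *ᵥ q)) / Real.sqrt (q ⬝ᵥ (A *ᵥ q)) := Real.div_sqrt.symm
        _ = (q ⬝ᵥ ((A + K) *ᵥ u)) / Real.sqrt (q ⬝ᵥ (A *ᵥ q)) := by rw [hBu]
        _ ≤ _ := this
    refine le_trans ?_ hle
    apply Real.sqrt_le_sqrt
    have := hK u
    rw [hqAq]
    linarith
end

section
/- Let v : (0,1) → ℝ be measurable with ∫₀¹ x v(x)² dx < ∞, and let q : [0,1] → ℝ be continuously differentiable with q(0) = 0. Then ∫₀¹ v(x)² q(x)² dx ≤ (∫₀¹ x v(x)² dx) · (∫₀¹ q'(x)² dx). -/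
open MeasureTheory

/-- Weighted one-dimensional bound: for measurable `v` with `∫₀¹ x v(x)² dx < ∞` and
`q` continuously differentiable on `[0,1]` with `q(0) = 0`,
`∫₀¹ v(x)² q(x)² dx ≤ (∫₀¹ x v(x)² dx) (∫₀¹ q'(x)² dx)`. -/
theorem weighted_velocity_bound_1d
    (v : ℝ → ℝ) (hv : Measurable v)
    (hvint : IntegrableOn (fun x => x * v x ^ 2) (Set.Ioc 0 1))
    (q : ℝ → ℝ) (hq : ContDiffOn ℝ 1 q (Set.Icc 0 1)) (hq0 : q 0 = 0) :
    (∫ x in Set.Ioc (0 : ℝ) 1, v x ^ 2 * q x ^ 2) ≤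
      (∫ x in Set.Ioc (0 : ℝ) 1, x * v x ^ 2) *
        ∫ x in Set.Ioc (0 : ℝ) 1, (derivWithin q (Set.Icc 0 1) x) ^ 2 := by
  set g : ℝ → ℝ := derivWithin q (Set.Icc 0 1) with hgdef
  have hunique : UniqueDiffOn ℝ (Set.Icc (0:ℝ) 1) := uniqueDiffOn_Icc one_pos
  have hgc : ContinuousOn g (Set.Icc 0 1) := hq.continuousOn_derivWithin hunique le_rfl
  set C : ℝ := ∫ x in Set.Ioc (0:ℝ) 1, g x ^ 2 with hCdef
  have hC0 : 0 ≤ C := setIntegral_nonneg measurableSet_Ioc (fun t _ => sq_nonneg _)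
  have hg2int : IntegrableOn (fun t => g t ^ 2) (Set.Icc 0 1) :=
    (hgc.pow 2).integrableOn_Icc
  have hderiv : ∀ t ∈ Set.Icc (0:ℝ) 1, HasDerivWithinAt q (g t) (Set.Icc 0 1) t := fun t ht =>
    ((hq.differentiableOn one_ne_zero) t ht).hasDerivWithinAt
  -- FTC
  have hqx : ∀ x ∈ Set.Icc (0:ℝ) 1, q x = ∫ t in Set.Ioc 0 x, g t := by
    intro x hx
    have hsub : Set.Icc (0:ℝ) x ⊆ Set.Icc 0 1 := Set.Icc_subset_Icc le_rfl hx.2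
    have h1 : ∫ t in (0:ℝ)..x, g t = q x - q 0 := by
      apply intervalIntegral.integral_eq_sub_of_hasDeriv_right_of_le hx.1
      · exact hq.continuousOn.mono hsub
      · intro t ht
        have htI : t ∈ Set.Ioo (0:ℝ) 1 := ⟨ht.1, lt_of_lt_of_le ht.2 hx.2⟩
        exact (((hderiv t (Set.Ioo_subset_Icc_self htI)).hasDerivAt
          (Icc_mem_nhds htI.1 htI.2)).hasDerivWithinAt)
      · exact (hgc.mono (by rw [Set.uIcc_of_le hx.1]; exact hsub)).intervalIntegrable
    rw [hq0, sub_zero] at h1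
    rw [← h1, intervalIntegral.integral_of_le hx.1]
  -- key pointwise bound via Cauchy-Schwarz
  have key : ∀ x ∈ Set.Ioc (0:ℝ) 1, q x ^ 2 ≤ x * C := by
    intro x hx
    have hx' : (0:ℝ) ≤ x := hx.1.le
    have hsub : Set.Ioc (0:ℝ) x ⊆ Set.Icc 0 1 :=
      fun t ht => ⟨ht.1.le, ht.2.trans hx.2⟩
    set μ := volume.restrict (Set.Ioc (0:ℝ) x) with hμ
    haveI : IsFiniteMeasure μ := by
      constructor
      rw [hμ, Measure.restrict_apply_univ, Real.volume_Ioc]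
      exact ENNReal.ofReal_lt_top
    have hgm : AEStronglyMeasurable g μ :=
      (hgc.mono hsub).aestronglyMeasurable measurableSet_Ioc
    obtain ⟨M, hM⟩ := isCompact_Icc.exists_bound_of_continuousOn hgc
    have hpq : Real.HolderConjugate 2 2 := Real.HolderConjugate.two_two
    have hgL2 : MemLp (fun t => |g t|) (ENNReal.ofReal 2) μ := by
      refine MemLp.of_bound hgm.norm M ?_
      rw [hμ]
      refine (ae_restrict_iff' measurableSet_Ioc).2 (ae_of_all _ fun t ht => ?_)
      simpa using hM t (hsub ht)
    have hone : MemLp (fun _ : ℝ => (1:ℝ)) (ENNReal.ofReal 2) μ := memLp_const 1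
    have hcs := integral_mul_le_Lp_mul_Lq_of_nonneg (μ := μ) hpq
      (ae_of_all _ fun _ => zero_le_one) (ae_of_all _ fun t => abs_nonneg (g t)) hone hgL2
    simp only [one_mul, Real.one_rpow] at hcs
    have hvol : ∫ _ in Set.Ioc (0:ℝ) x, (1:ℝ) = x := by
      simp [Real.volume_Ioc, ENNReal.toReal_ofReal hx', hx']
    have habs2 : ∀ t, |g t| ^ (2:ℝ) = g t ^ 2 := fun t => by
      rw [show (2:ℝ) = ((2:ℕ):ℝ) by norm_num, Real.rpow_natCast, sq_abs]
    rw [hμ] at hcs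
    simp only [habs2] at hcs
    rw [hvol] at hcs
    -- hcs : ∫ |g| ≤ x ^ (1/2) * (∫ g²)^(1/2)
    have hI2 : ∫ t in Set.Ioc (0:ℝ) x, g t ^ 2 ≤ C := by
      refine setIntegral_mono_set (hg2int.mono_set Set.Ioc_subset_Icc_self)
        (ae_of_all _ fun t => sq_nonneg _) (HasSubset.Subset.eventuallyLE ?_)
      exact Set.Ioc_subset_Ioc le_rfl hx.2
    have hI2nn : 0 ≤ ∫ t in Set.Ioc (0:ℝ) x, g t ^ 2 :=
      setIntegral_nonneg measurableSet_Ioc (fun t _ => sq_nonneg _)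
    have hqabs : |q x| ≤ x ^ ((1:ℝ)/2) * (∫ t in Set.Ioc (0:ℝ) x, g t ^ 2) ^ ((1:ℝ)/2) := by
      rw [hqx x ⟨hx', hx.2⟩]
      refine le_trans ?_ hcs
      simpa [Real.norm_eq_abs] using
        norm_integral_le_integral_norm (μ := volume.restrict (Set.Ioc (0:ℝ) x)) g
    have hsq : ∀ a : ℝ, 0 ≤ a → (a ^ ((1:ℝ)/2)) ^ 2 = a := fun a ha => by
      rw [← Real.rpow_natCast (a ^ ((1:ℝ)/2)) 2, ← Real.rpow_mul ha]
      norm_num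
    calc q x ^ 2 = |q x| ^ 2 := (sq_abs _).symm
      _ ≤ (x ^ ((1:ℝ)/2) * (∫ t in Set.Ioc (0:ℝ) x, g t ^ 2) ^ ((1:ℝ)/2)) ^ 2 :=
          pow_le_pow_left₀ (abs_nonneg _) hqabs 2
      _ = x * ∫ t in Set.Ioc (0:ℝ) x, g t ^ 2 := by
          rw [mul_pow, hsq x hx', hsq _ hI2nn]
      _ ≤ x * C := mul_le_mul_of_nonneg_left hI2 hx'
  -- conclude
  have hqm : AEStronglyMeasurable q (volume.restrict (Set.Ioc (0:ℝ) 1)) :=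
    (hq.continuousOn.mono Set.Ioc_subset_Icc_self).aestronglyMeasurable measurableSet_Ioc
  have hfm : AEStronglyMeasurable (fun x => v x ^ 2 * q x ^ 2)
      (volume.restrict (Set.Ioc (0:ℝ) 1)) :=
    ((hv.aemeasurable.pow_const 2).mul (hqm.aemeasurable.pow_const 2)).aestronglyMeasurable
  have hgint : Integrable (fun x => (x * v x ^ 2) * C) (volume.restrict (Set.Ioc (0:ℝ) 1)) :=
    hvint.mul_const C
  have hfint : IntegrableOn (fun x => v x ^ 2 * q x ^ 2) (Set.Ioc 0 1) := by
    refine hgint.mono' hfm ?_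
    refine (ae_restrict_iff' measurableSet_Ioc).2 (ae_of_all _ fun x hx => ?_)
    rw [Real.norm_of_nonneg (mul_nonneg (sq_nonneg _) (sq_nonneg _))]
    calc v x ^ 2 * q x ^ 2 ≤ v x ^ 2 * (x * C) :=
          mul_le_mul_of_nonneg_left (key x hx) (sq_nonneg _)
      _ = (x * v x ^ 2) * C := by ring
  calc (∫ x in Set.Ioc (0:ℝ) 1, v x ^ 2 * q x ^ 2)
      ≤ ∫ x in Set.Ioc (0:ℝ) 1, (x * v x ^ 2) * C := by
        refine setIntegral_mono_on hfint hgint measurableSet_Ioc fun x hx => ?_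
        calc v x ^ 2 * q x ^ 2 ≤ v x ^ 2 * (x * C) :=
              mul_le_mul_of_nonneg_left (key x hx) (sq_nonneg _)
          _ = (x * v x ^ 2) * C := by ring
    _ = (∫ x in Set.Ioc (0:ℝ) 1, x * v x ^ 2) * C := integral_mul_const _ _
end

section
/- Let p, q : [0,1] → ℝ be continuously differentiable with p(0) = q(0) = 0. Then |∫₀¹ (1/x) p(x) q(x) dx| ≤ (∫₀¹ p'(x)² dx)^{1/2} (∫₀¹ q'(x)² dx)^{1/2}. -/
open MeasureTheory

lemma cs_aux {f : ℝ → ℝ} (hf : ContinuousOn f (Set.Icc 0 1)) {x : ℝ}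
    (hx : x ∈ Set.Ioc (0:ℝ) 1) :
    ∫ s in Set.Ioc (0:ℝ) x, |f s| ≤
      Real.sqrt x * Real.sqrt (∫ s in Set.Ioc (0:ℝ) 1, f s ^ 2) := by
  obtain ⟨hx0, hx1⟩ := hx
  have hsub : Set.Ioc (0:ℝ) x ⊆ Set.Icc 0 1 :=
    (Set.Ioc_subset_Icc_self).trans (Set.Icc_subset_Icc le_rfl hx1)
  set μ : Measure ℝ := volume.restrict (Set.Ioc (0:ℝ) x) with hμ
  haveI : IsFiniteMeasure μ := by
    constructor
    rw [hμ, Measure.restrict_apply_univ]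
    exact (measure_Ioc_lt_top)
  obtain ⟨C, hC⟩ := (isCompact_Icc.exists_bound_of_continuousOn hf)
  have hmeas : AEStronglyMeasurable (fun s => |f s|) μ :=
    ((hf.mono hsub).abs).aestronglyMeasurable measurableSet_Ioc
  have hmem : MemLp (fun s => |f s|) (ENNReal.ofReal 2) μ := by
    apply MemLp.of_bound hmeas C
    filter_upwards [ae_restrict_mem measurableSet_Ioc] with s hs
    simpa [abs_abs] using hC s (hsub hs)
  have hmem1 : MemLp (fun _ : ℝ => (1:ℝ)) (ENNReal.ofReal 2) μ := memLp_const 1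
  have hconj : Real.HolderConjugate 2 2 := Real.holderConjugate_iff.mpr ⟨one_lt_two, by norm_num⟩
  have holder := integral_mul_le_Lp_mul_Lq_of_nonneg hconj
    (f := fun s => |f s|) (g := fun _ => (1:ℝ))
    (Filter.Eventually.of_forall fun s => abs_nonneg _)
    (Filter.Eventually.of_forall fun s => zero_le_one) hmem hmem1
  have h1 : ∫ s, |f s| * 1 ∂μ = ∫ s in Set.Ioc (0:ℝ) x, |f s| := by simp [hμ]
  have h2 : ∫ s, (1:ℝ) ^ (2:ℝ) ∂μ = x := by
    simp [hμ, Real.volume_Ioc, ENNReal.toReal_ofReal hx0.le, hx0.le]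
  have hint1 : IntegrableOn (fun s => f s ^ 2) (Set.Icc (0:ℝ) 1) :=
    (hf.pow 2).integrableOn_compact isCompact_Icc
  have h3 : ∫ s, |f s| ^ (2:ℝ) ∂μ ≤ ∫ s in Set.Ioc (0:ℝ) 1, f s ^ 2 := by
    have h2cast : ((2:ℝ)) = ((2:ℕ):ℝ) := by norm_num
    have : ∫ s, |f s| ^ (2:ℝ) ∂μ = ∫ s in Set.Ioc (0:ℝ) x, f s ^ 2 := by
      refine integral_congr_ae (Filter.Eventually.of_forall fun s => ?_)
      simp only [h2cast, Real.rpow_natCast, sq_abs]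
    rw [this]
    exact setIntegral_mono_set (hint1.mono_set Set.Ioc_subset_Icc_self)
      (Filter.Eventually.of_forall fun s => sq_nonneg _)
      (HasSubset.Subset.eventuallyLE (Set.Ioc_subset_Ioc le_rfl hx1))
  rw [h1] at holder
  calc ∫ s in Set.Ioc (0:ℝ) x, |f s|
      ≤ (∫ s, |f s| ^ (2:ℝ) ∂μ) ^ (1/(2:ℝ)) * (∫ s, (1:ℝ) ^ (2:ℝ) ∂μ) ^ (1/(2:ℝ)) := holder
    _ ≤ (∫ s in Set.Ioc (0:ℝ) 1, f s ^ 2) ^ (1/(2:ℝ)) * x ^ (1/(2:ℝ)) := by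
        rw [h2]
        exact mul_le_mul_of_nonneg_right
          (Real.rpow_le_rpow (integral_nonneg fun s => Real.rpow_nonneg (abs_nonneg _) _)
            h3 (by norm_num))
          (Real.rpow_nonneg hx0.le _)
    _ = Real.sqrt x * Real.sqrt (∫ s in Set.Ioc (0:ℝ) 1, f s ^ 2) := by
        rw [Real.sqrt_eq_rpow, Real.sqrt_eq_rpow, mul_comm]

lemma ftc_aux {f : ℝ → ℝ} (hf : ContDiffOn ℝ 1 f (Set.Icc 0 1)) (hf0 : f 0 = 0) {x : ℝ}
    (hx : x ∈ Set.Ioc (0:ℝ) 1) :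
    |f x| ≤ Real.sqrt x *
      Real.sqrt (∫ s in Set.Ioc (0:ℝ) 1, (derivWithin f (Set.Icc 0 1) s) ^ 2) := by
  obtain ⟨hx0, hx1⟩ := hx
  set f' := derivWithin f (Set.Icc 0 1) with hf'
  have hu : UniqueDiffOn ℝ (Set.Icc (0:ℝ) 1) := uniqueDiffOn_Icc one_pos
  have hf'c : ContinuousOn f' (Set.Icc 0 1) := hf.continuousOn_derivWithin hu le_rfl
  have heq : ∫ s in (0:ℝ)..x, f' s = f x - f 0 := by
    apply intervalIntegral.integral_eq_sub_of_hasDeriv_right_of_le hx0.le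
    · exact hf.continuousOn.mono (Set.Icc_subset_Icc le_rfl hx1)
    · intro t ht
      have ht' : t ∈ Set.Icc (0:ℝ) 1 := ⟨ht.1.le, (ht.2.trans_le hx1).le⟩
      have h1 : HasDerivWithinAt f (f' t) (Set.Icc 0 1) t :=
        ((hf.differentiableOn one_ne_zero) t ht').hasDerivWithinAt
      have h2 : Set.Icc (0:ℝ) 1 ∈ nhds t :=
        Icc_mem_nhds ht.1 (ht.2.trans_le hx1)
      exact (h1.hasDerivAt h2).hasDerivWithinAt
    · exact (hf'c.mono (Set.Icc_subset_Icc le_rfl hx1)).intervalIntegrable_of_Icc hx0.le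
  have : f x = ∫ s in Set.Ioc (0:ℝ) x, f' s := by
    rw [← intervalIntegral.integral_of_le hx0.le, heq, hf0, sub_zero]
  rw [this]
  calc |∫ s in Set.Ioc (0:ℝ) x, f' s| ≤ ∫ s in Set.Ioc (0:ℝ) x, |f' s| :=
        by simpa using norm_integral_le_integral_norm f'
    _ ≤ _ := cs_aux hf'c ⟨hx0, hx1⟩

/-- Bilinear Hardy-type estimate on `(0,1)`: for `p, q` continuously differentiable on
`[0,1]` with `p(0) = q(0) = 0`,
`|∫₀¹ (1/x) p(x) q(x) dx| ≤ (∫₀¹ p'² dx)^{1/2} (∫₀¹ q'² dx)^{1/2}`. -/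
theorem bilinear_hardy_estimate
    (p q : ℝ → ℝ)
    (hp : ContDiffOn ℝ 1 p (Set.Icc 0 1)) (hp0 : p 0 = 0)
    (hq : ContDiffOn ℝ 1 q (Set.Icc 0 1)) (hq0 : q 0 = 0) :
    |∫ x in Set.Ioc (0 : ℝ) 1, (1 / x) * p x * q x| ≤
      Real.sqrt (∫ x in Set.Ioc (0 : ℝ) 1, (derivWithin p (Set.Icc 0 1) x) ^ 2) *
        Real.sqrt (∫ x in Set.Ioc (0 : ℝ) 1, (derivWithin q (Set.Icc 0 1) x) ^ 2) := by
  set Ip := Real.sqrt (∫ x in Set.Ioc (0:ℝ) 1, (derivWithin p (Set.Icc 0 1) x) ^ 2) with hIp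
  set Iq := Real.sqrt (∫ x in Set.Ioc (0:ℝ) 1, (derivWithin q (Set.Icc 0 1) x) ^ 2) with hIq
  have key : ∀ x ∈ Set.Ioc (0:ℝ) 1, ‖(1/x) * p x * q x‖ ≤ Ip * Iq := by
    intro x hx
    have hx0 : (0:ℝ) < x := hx.1
    have hbp := ftc_aux hp hp0 hx
    have hbq := ftc_aux hq hq0 hx
    have hnorm : ‖(1/x) * p x * q x‖ = (1/x) * |p x| * |q x| := by
      rw [Real.norm_eq_abs, abs_mul, abs_mul, abs_of_pos (by positivity : (0:ℝ) < 1/x)]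
    rw [hnorm]
    calc (1/x) * |p x| * |q x|
        ≤ (1/x) * (Real.sqrt x * Ip) * (Real.sqrt x * Iq) := by
          gcongr
      _ = (Real.sqrt x * Real.sqrt x / x) * (Ip * Iq) := by ring
      _ = Ip * Iq := by
          rw [Real.mul_self_sqrt hx0.le, div_self hx0.ne', one_mul]
  have hfin : volume (Set.Ioc (0:ℝ) 1) < ⊤ := measure_Ioc_lt_top
  have := norm_setIntegral_le_of_norm_le_const hfin key
  rw [Real.norm_eq_abs] at this
  simpa [Real.volume_Ioc] using this
end

section
/- Let p : [0,1] → ℝ be continuously differentiable with p(0) = p(1) = 0, and define u_p(x) := x · p(x). Then ∫₀¹ u_p'(x) p'(x) dx + ∫₀¹ (1/x) u_p'(x) p(x) dx = ∫₀¹ x p'(x)² dx + ∫₀¹ p(x)²/x dx. In particular, if p is not identically zero, then this quantity is strictly positive. -/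
open MeasureTheory Set

/-- Surjectivity identity for the velocity `v(x) = 1/x` on `(0,1)`: for `p`
continuously differentiable on `[0,1]` with `p(0) = p(1) = 0` and `u_p(x) = x p(x)`,
`∫₀¹ u_p' p' dx + ∫₀¹ (1/x) u_p' p dx = ∫₀¹ x p'(x)² dx + ∫₀¹ p(x)²/x dx`,
which is strictly positive when `p` is not identically zero on `[0,1]`. -/
theorem surjectivity_identity_one_over_x
    (p : ℝ → ℝ) (hp : ContDiffOn ℝ 1 p (Set.Icc 0 1))
    (hp0 : p 0 = 0) (hp1 : p 1 = 0) :
    ((∫ x in Set.Ioc (0 : ℝ) 1,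
        derivWithin (fun y => y * p y) (Set.Icc 0 1) x * derivWithin p (Set.Icc 0 1) x) +
      (∫ x in Set.Ioc (0 : ℝ) 1,
        (1 / x) * derivWithin (fun y => y * p y) (Set.Icc 0 1) x * p x)
      = (∫ x in Set.Ioc (0 : ℝ) 1, x * (derivWithin p (Set.Icc 0 1) x) ^ 2) +
          ∫ x in Set.Ioc (0 : ℝ) 1, p x ^ 2 / x) ∧
    ((∃ x ∈ Set.Icc (0 : ℝ) 1, p x ≠ 0) →
      0 < (∫ x in Set.Ioc (0 : ℝ) 1,
            derivWithin (fun y => y * p y) (Set.Icc 0 1) x * derivWithin p (Set.Icc 0 1) x) +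
          ∫ x in Set.Ioc (0 : ℝ) 1,
            (1 / x) * derivWithin (fun y => y * p y) (Set.Icc 0 1) x * p x) := by
  set s : Set ℝ := Set.Icc 0 1 with hs
  set g : ℝ → ℝ := derivWithin p s with hg
  have huniq : UniqueDiffOn ℝ s := uniqueDiffOn_Icc zero_lt_one
  have hpc : ContinuousOn p s := hp.continuousOn
  have hgc : ContinuousOn g s := hp.continuousOn_derivWithin huniq le_rfl
  have hdiff : ∀ x ∈ s, HasDerivWithinAt p (g x) s x := fun x hx =>
    ((hp.differentiableOn one_ne_zero) x hx).hasDerivWithinAt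
  have hD : ∀ x ∈ s, derivWithin (fun y => y * p y) s x = p x + x * g x := by
    intro x hx
    have h1 : HasDerivWithinAt (fun y : ℝ => y * p y) (1 * p x + x * g x) s x :=
      (hasDerivWithinAt_id x s).mul (hdiff x hx)
    rw [h1.derivWithin (huniq x hx)]; ring
  have hIoc : Set.Ioc (0:ℝ) 1 ⊆ s := Set.Ioc_subset_Icc_self
  -- integrabilities
  have Ipg : IntegrableOn (fun x => p x * g x) (Set.Ioc (0:ℝ) 1) := by
    exact ((hpc.mul hgc).integrableOn_Icc).mono_set hIoc
  have Ixg2 : IntegrableOn (fun x => x * g x ^ 2) (Set.Ioc (0:ℝ) 1) := by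
    exact ((continuousOn_id.mul (hgc.pow 2)).integrableOn_Icc).mono_set hIoc
  -- bound on p: |p x| ≤ M x
  obtain ⟨M, hM⟩ := (isCompact_Icc (a := (0:ℝ)) (b := 1)).exists_bound_of_continuousOn hgc
  have hM0 : 0 ≤ M := le_trans (norm_nonneg _) (hM 0 ⟨le_rfl, zero_le_one⟩)
  have hpb : ∀ x ∈ s, |p x| ≤ M * x := by
    intro x hx
    have := Convex.norm_image_sub_le_of_norm_derivWithin_le (hp.differentiableOn one_ne_zero) hM
      (convex_Icc 0 1) (⟨le_rfl, zero_le_one⟩ : (0:ℝ) ∈ s) hx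
    simpa [hp0, abs_of_nonneg hx.1] using this
  have Ip2x : IntegrableOn (fun x => p x ^ 2 / x) (Set.Ioc (0:ℝ) 1) := by
    refine ⟨(((hpc.mono hIoc).pow 2).div continuousOn_id (fun x hx => ne_of_gt hx.1)).aestronglyMeasurable
      measurableSet_Ioc, ?_⟩
    apply HasFiniteIntegral.restrict_of_bounded (C := M ^ 2) measure_Ioc_lt_top
    filter_upwards [ae_restrict_mem measurableSet_Ioc] with x hx
    have hx0 : 0 < x := hx.1
    have h1 : |p x| ≤ M * x := hpb x (hIoc hx)
    have : p x ^ 2 ≤ (M * x) ^ 2 := by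
      rw [← sq_abs]; exact pow_le_pow_left₀ (abs_nonneg _) h1 2
    have h2 : p x ^ 2 / x ≤ M ^ 2 * x := by
      rw [div_le_iff₀ hx0]; calc p x ^ 2 ≤ (M*x)^2 := this
        _ = M^2 * x * x := by ring
    have h3 : 0 ≤ p x ^ 2 / x := div_nonneg (sq_nonneg _) hx0.le
    rw [Real.norm_eq_abs, abs_of_nonneg h3]
    calc p x ^ 2 / x ≤ M^2 * x := h2
      _ ≤ M^2 * 1 := by nlinarith [hx.2]
      _ = M^2 := mul_one _
  -- FTC : ∫ 2 p g = 0
  have hFTC : ∫ x in Set.Ioc (0:ℝ) 1, 2 * (p x * g x) = 0 := by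
    have : ∫ x in (0:ℝ)..1, 2 * (p x * g x) = p 1 ^ 2 - p 0 ^ 2 := by
      apply intervalIntegral.integral_eq_sub_of_hasDeriv_right_of_le
        (f := fun x => p x ^ 2) zero_le_one
      · exact hpc.pow 2
      · intro x hx
        have hxs : x ∈ s := ⟨hx.1.le, hx.2.le⟩
        have hmem : s ∈ nhds x := Icc_mem_nhds hx.1 hx.2
        have hpd : HasDerivAt p (g x) x := (hdiff x hxs).hasDerivAt hmem
        have : HasDerivAt (fun y => p y ^ 2) (2 * (p x * g x)) x := by
          have := hpd.pow 2
          show HasDerivAt (p ^ 2) _ x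
          simpa [mul_assoc, mul_comm, mul_left_comm] using this
        exact this.hasDerivWithinAt
      · rw [intervalIntegrable_iff_integrableOn_Ioc_of_le zero_le_one]
        exact Ipg.const_mul 2
    rw [intervalIntegral.integral_of_le zero_le_one] at this
    rw [this, hp0, hp1]; ring
  have hpg0 : ∫ x in Set.Ioc (0:ℝ) 1, p x * g x = 0 := by
    have h2 : ∫ x in Set.Ioc (0:ℝ) 1, 2 * (p x * g x)
        = 2 * ∫ x in Set.Ioc (0:ℝ) 1, p x * g x := integral_const_mul 2 _
    linarith [hFTC, h2.symm]
  -- rewrite the two integrals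
  have e1 : ∫ x in Set.Ioc (0:ℝ) 1, derivWithin (fun y => y * p y) s x * g x
      = ∫ x in Set.Ioc (0:ℝ) 1, (p x * g x + x * g x ^ 2) := by
    apply setIntegral_congr_fun measurableSet_Ioc
    intro x hx
    dsimp only
    rw [hD x (hIoc hx)]; ring
  have e2 : ∫ x in Set.Ioc (0:ℝ) 1, (1 / x) * derivWithin (fun y => y * p y) s x * p x
      = ∫ x in Set.Ioc (0:ℝ) 1, (p x ^ 2 / x + p x * g x) := by
    apply setIntegral_congr_fun measurableSet_Ioc
    intro x hx
    dsimp only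
    rw [hD x (hIoc hx)]
    have hx0 : x ≠ 0 := ne_of_gt hx.1
    field_simp
  have key : (∫ x in Set.Ioc (0:ℝ) 1, derivWithin (fun y => y * p y) s x * g x) +
      (∫ x in Set.Ioc (0:ℝ) 1, (1 / x) * derivWithin (fun y => y * p y) s x * p x)
      = (∫ x in Set.Ioc (0:ℝ) 1, x * g x ^ 2) + ∫ x in Set.Ioc (0:ℝ) 1, p x ^ 2 / x := by
    rw [e1, e2, integral_add Ipg Ixg2, integral_add Ip2x Ipg, hpg0]
    ring
  refine ⟨key, ?_⟩
  rintro ⟨x0, hx0s, hx0⟩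
  rw [key]
  have hx0' : x0 ∈ Set.Ioo (0:ℝ) 1 := by
    have h0 : x0 ≠ 0 := fun h => hx0 (by rw [h]; exact hp0)
    have h1 : x0 ≠ 1 := fun h => hx0 (by rw [h]; exact hp1)
    exact ⟨lt_of_le_of_ne hx0s.1 (Ne.symm h0), lt_of_le_of_ne hx0s.2 h1⟩
  have hxg2 : 0 ≤ ∫ x in Set.Ioc (0:ℝ) 1, x * g x ^ 2 := by
    apply setIntegral_nonneg measurableSet_Ioc
    intro x hx
    exact mul_nonneg hx.1.le (sq_nonneg _)
  have hpos : 0 < ∫ x in Set.Ioc (0:ℝ) 1, p x ^ 2 / x := by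
    have hnn : (0 : ℝ → ℝ) ≤ᵐ[volume.restrict (Set.Ioc (0:ℝ) 1)] fun x => p x ^ 2 / x := by
      filter_upwards [ae_restrict_mem measurableSet_Ioc] with x hx
      exact div_nonneg (sq_nonneg _) hx.1.le
    rw [setIntegral_pos_iff_support_of_nonneg_ae hnn Ip2x]
    · -- measure of support positive
      have hca : ContinuousAt p x0 :=
        (hpc.continuousWithinAt (hIoc (Set.Ioo_subset_Ioc_self hx0'))).continuousAt
          (Icc_mem_nhds hx0'.1 hx0'.2)
      have hev : ∀ᶠ y in nhds x0, p y ≠ 0 ∧ y ∈ Set.Ioo (0:ℝ) 1 :=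
        (hca.eventually_ne hx0).and (isOpen_Ioo.eventually_mem hx0')
      obtain ⟨ε, hε, hball⟩ := Metric.eventually_nhds_iff_ball.1 hev
      have hsub : Metric.ball x0 ε ⊆ Function.support (fun x => p x ^ 2 / x) ∩ Set.Ioc 0 1 := by
        intro y hy
        obtain ⟨hpy, hyI⟩ := hball y hy
        refine ⟨?_, Set.Ioo_subset_Ioc_self hyI⟩
        simp only [Function.mem_support]
        exact div_ne_zero (pow_ne_zero 2 hpy) (ne_of_gt hyI.1)
      exact lt_of_lt_of_le (Metric.measure_ball_pos volume x0 hε) (measure_mono hsub)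
  linarith
end

section
/- Let H be a real Hilbert space, V ⊆ H a closed subspace, e ∈ H, and φ : H → ℝ a bounded linear functional. Suppose w ∈ V satisfies ⟨w, q⟩ = φ(q) for all q ∈ V, and p ∈ V satisfies ⟨p, q⟩ = ⟨e, q⟩ + φ(q) for all q ∈ V. Then (1/√2) ‖p‖ ≤ √(‖e‖² + ‖w‖²). -/
open RealInnerProductSpace

/-! The relations for `w` and `p`, tested with `q = p`, give `⟪p, p⟫ = ⟪e + w, p⟫`, so
Cauchy–Schwarz yields `‖p‖ ≤ ‖e + w‖`; the parallelogram law bounds `‖e + w‖²` by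
`2 (‖e‖² + ‖w‖²)`. -/

section

variable {H : Type*} [NormedAddCommGroup H] [InnerProductSpace ℝ H]

theorem norm_le_of_real_inner_self_eq {x y : H} (h : ⟪x, x⟫ = ⟪y, x⟫) : ‖x‖ ≤ ‖y‖ := by
  have hsq : ‖x‖ * ‖x‖ ≤ ‖y‖ * ‖x‖ := by
    rw [← real_inner_self_eq_norm_mul_norm, h]
    exact real_inner_le_norm y x
  rcases (norm_nonneg x).eq_or_lt with hx | hx
  · rw [← hx]
    exact norm_nonneg y
  · exact le_of_mul_le_mul_right hsq hx

theorem norm_add_le_sqrt_two_mul_sqrt_add_sq (x y : H) :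
    ‖x + y‖ ≤ √2 * √(‖x‖ ^ 2 + ‖y‖ ^ 2) := by
  rw [← Real.sqrt_mul zero_le_two]
  apply Real.le_sqrt_of_sq_le
  have := parallelogram_law_with_norm ℝ x y
  nlinarith [mul_self_nonneg ‖x - y‖]

end

theorem abstract_efficiency_estimate_general
    {H : Type*} [NormedAddCommGroup H] [InnerProductSpace ℝ H]
    (V : Submodule ℝ H)
    (e : H) (φ : H →L[ℝ] ℝ)
    (w : H) (hw : ∀ q ∈ V, ⟪w, q⟫ = φ q)
    (p : H) (hpV : p ∈ V) (hp : ∀ q ∈ V, ⟪p, q⟫ = ⟪e, q⟫ + φ q) :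
    (1 / Real.sqrt 2) * ‖p‖ ≤ Real.sqrt (‖e‖ ^ 2 + ‖w‖ ^ 2) := by
  have hpp : ⟪p, p⟫ = ⟪e + w, p⟫ := by
    rw [inner_add_left, hp p hpV, hw p hpV]
  have hp_le : ‖p‖ ≤ √2 * √(‖e‖ ^ 2 + ‖w‖ ^ 2) :=
    (norm_le_of_real_inner_self_eq hpp).trans (norm_add_le_sqrt_two_mul_sqrt_add_sq e w)
  rw [one_div_mul_eq_div, div_le_iff₀' (by positivity)]
  exact hp_le

/-- Abstract efficiency estimate for the least-squares adjoint: if `w ∈ V` represents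
the functional `φ` on the closed subspace `V` and `p ∈ V` satisfies
`⟨p, q⟩ = ⟨e, q⟩ + φ(q)` for all `q ∈ V`, then `(1/√2) ‖p‖ ≤ √(‖e‖² + ‖w‖²)`. -/
theorem abstract_efficiency_estimate
    {H : Type*} [NormedAddCommGroup H] [InnerProductSpace ℝ H]
    (V : Submodule ℝ H) (hV : IsClosed (V : Set H))
    (e : H) (φ : H →L[ℝ] ℝ)
    (w : H) (hwV : w ∈ V) (hw : ∀ q ∈ V, ⟪w, q⟫ = φ q)
    (p : H) (hpV : p ∈ V) (hp : ∀ q ∈ V, ⟪p, q⟫ = ⟪e, q⟫ + φ q) :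
    (1 / Real.sqrt 2) * ‖p‖ ≤ Real.sqrt (‖e‖ ^ 2 + ‖w‖ ^ 2) :=
  abstract_efficiency_estimate_general V e φ w hw p hpV hp
end

section
/- Let X be a real vector space equipped with a seminorm N, let X_H ⊆ X_h ⊆ X be linear subspaces, let Y be a real Hilbert space with a closed subspace V, and let b : X × Y → ℝ be a bilinear form satisfying the discrete inf-sup condition N(x) ≤ sup_{q ∈ V, q ≠ 0} b(x, q)/‖q‖ for all x ∈ X_h. Let u ∈ X, u_H ∈ X_H, u_h ∈ X_h and p ∈ V be such that b(u_h − u_H, q) = ⟨p, q⟩ for all q ∈ V, and assume the saturation condition N(u − u_h) ≤ η N(u − u_H) for some η ∈ (0,1). Then N(u − u_H) ≤ (1/(1−η)) ‖p‖. -/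
open RealInnerProductSpace

theorem iSup_inner_div_norm_le_norm {Y : Type*} [NormedAddCommGroup Y] [InnerProductSpace ℝ Y]
    (V : Submodule ℝ Y) (p : Y) :
    ⨆ q : {q : Y // q ∈ V ∧ q ≠ 0}, ⟪p, (q : Y)⟫ / ‖(q : Y)‖ ≤ ‖p‖ :=
  Real.iSup_le (fun q => div_le_of_le_mul₀ (norm_nonneg _) (norm_nonneg p)
    (real_inner_le_norm p q)) (norm_nonneg p)

/-- The saturation step: `N (u - w) ≤ η N (u - v)` lets the triangle inequality through `w`
absorb the first term into the left-hand side. -/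
theorem map_sub_le_of_saturation {F X : Type*} [AddGroup X] [FunLike F X ℝ]
    [AddGroupSeminormClass F X ℝ] (N : F) {u v w : X} {η : ℝ} (hη : η < 1)
    (hsat : N (u - w) ≤ η * N (u - v)) :
    N (u - v) ≤ (1 / (1 - η)) * N (w - v) := by
  have htri : N (u - v) ≤ N (u - w) + N (w - v) := by
    simpa only [sub_add_sub_cancel] using map_add_le_add N (u - w) (w - v)
  rw [div_mul_eq_mul_div, one_mul, le_div_iff₀ (sub_pos.mpr hη)]
  linarith

theorem abstract_reliability_estimate_general
    {X : Type*} [AddCommGroup X] [Module ℝ X] (N : Seminorm ℝ X)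
    {Y : Type*} [NormedAddCommGroup Y] [InnerProductSpace ℝ Y]
    (XH Xh : Submodule ℝ X) (hXHh : XH ≤ Xh)
    (V : Submodule ℝ Y)
    (b : X →ₗ[ℝ] Y →ₗ[ℝ] ℝ)
    (hinfsup : ∀ x ∈ Xh,
      N x ≤ ⨆ q : {q : Y // q ∈ V ∧ q ≠ 0}, b x (q : Y) / ‖(q : Y)‖)
    (u uH uh : X) (huH : uH ∈ XH) (huh : uh ∈ Xh)
    (p : Y)
    (hgal : ∀ q ∈ V, b (uh - uH) q = ⟪p, q⟫)
    (η : ℝ) (hη : η ∈ Set.Ioo (0 : ℝ) 1)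
    (hsat : N (u - uh) ≤ η * N (u - uH)) :
    N (u - uH) ≤ (1 / (1 - η)) * ‖p‖ := by
  have hdiscrete : N (uh - uH) ≤ ‖p‖ := by
    have hsup := hinfsup _ (Xh.sub_mem huh (hXHh huH))
    simp only [fun q : {q : Y // q ∈ V ∧ q ≠ 0} => hgal q q.2.1] at hsup
    exact hsup.trans (iSup_inner_div_norm_le_norm V p)
  have hfactor : 0 ≤ 1 / (1 - η) := one_div_nonneg.mpr (sub_pos.mpr hη.2).le
  calc N (u - uH) ≤ (1 / (1 - η)) * N (uh - uH) := map_sub_le_of_saturation N hη.2 hsat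
    _ ≤ (1 / (1 - η)) * ‖p‖ := mul_le_mul_of_nonneg_left hdiscrete hfactor

/-- Abstract reliability estimate for the adaptive least-squares method: under the
discrete inf-sup condition on `X_h`, the Galerkin orthogonality
`b(u_h − u_H, q) = ⟨p, q⟩` for all `q ∈ V`, and the saturation condition
`N(u − u_h) ≤ η N(u − u_H)` with `η ∈ (0,1)`, there holds
`N(u − u_H) ≤ (1/(1−η)) ‖p‖`. -/
theorem abstract_reliability_estimate
    {X : Type*} [AddCommGroup X] [Module ℝ X] (N : Seminorm ℝ X)
    {Y : Type*} [NormedAddCommGroup Y] [InnerProductSpace ℝ Y]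
    (XH Xh : Submodule ℝ X) (hXHh : XH ≤ Xh)
    (V : Submodule ℝ Y) (hV : IsClosed (V : Set Y))
    (b : X →ₗ[ℝ] Y →ₗ[ℝ] ℝ)
    (hinfsup : ∀ x ∈ Xh,
      N x ≤ ⨆ q : {q : Y // q ∈ V ∧ q ≠ 0}, b x (q : Y) / ‖(q : Y)‖)
    (u uH uh : X) (huH : uH ∈ XH) (huh : uh ∈ Xh)
    (p : Y) (hpV : p ∈ V)
    (hgal : ∀ q ∈ V, b (uh - uH) q = ⟪p, q⟫)
    (η : ℝ) (hη : η ∈ Set.Ioo (0 : ℝ) 1)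
    (hsat : N (u - uh) ≤ η * N (u - uH)) :
    N (u - uH) ≤ (1 / (1 - η)) * ‖p‖ :=
  abstract_reliability_estimate_general N XH Xh hXHh V b hinfsup u uH uh huH huh p hgal η hη hsat
end
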